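/- Define Ĵ_r^+(s) := (2π)^{−s}·Γ(s/2 + ir)·Γ(s/2 − ir)·cos(πs/2), Ĵ_r^−(s) := (2π)^{−s}·Γ(s/2 + ir)·Γ(s/2 − ir)·cosh(πr), and for T > 0 set 𝒢_T^+(w) := Ĵ₀^+(w)·Ĵ_{2T}^−(w) + Ĵ₀^−(w)·Ĵ_{2T}^+(w) and 𝒢_T^−(w) := Ĵ₀^+(w)·Ĵ_{2T}^+(w) + Ĵ₀^−(w)·Ĵ_{2T}^−(w). Fix σ < 1. There exists a constant C > 0 (depending only on σ) such that for all t_g ≥ 1 and all s = σ + iτ: (i) |𝒢_{t_g}^+(1−s)| ≤ C·(1+|τ|)^{−σ}·((1+|τ+4t_g|)·(1+|τ−4t_g|))^{−σ/2}·E⁺, where E⁺ = 1 if |τ| ≤ 4t_g and E⁺ = e^{−(π/2)(|τ|−4t_g)} if |τ| ≥ 4t_g; and (ii) |𝒢_{t_g}^−(1−s)| ≤ C·(1+|τ|)^{−σ}·((1+|τ+4t_g|)·(1+|τ−4t_g|))^{−σ/2}·E⁻, where E⁻ = e^{−(π/2)|τ|} if |τ| ≤ 2t_g, E⁻ = e^{−(π/2)(4t_g−|τ|)}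 if 2t_g ≤ |τ| ≤ 4t_g, and E⁻ = 1 if |τ| ≥ 4t_g. -/

import Mathlib

/-!
Euler's product gives `‖Γ(a + iy)‖ ≤ Γ(a) ∏_{k ≤ n} (1 + (y/(a+k))²)^{-1/2}` for every `n`. Taking
`n ≈ y²` and comparing `∑ log (1 + (y/(a+k))²)` with its integral by the trapezoid rule (the summand
is convex in `k`) yields `‖Γ(a + iy)‖ ≪_a (1 + |y|)^{a - 1/2} e^{-π|y|/2}`. With `a = (1 - σ)/2` the
Gamma factors of `Ĵ_r^±(1 - s)` sit at `a + i(±r - τ/2)`, and their decay combines to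
`e^{-(π/2) max(|τ|, 2|r|)}`; the remaining factor is `cos(π(1-s)/2) ≪ e^{π|τ|/2}` or
`cosh(πr) ≤ e^{π|r|}`. Multiplying out `𝒢^±` and comparing the exponents case by case gives `E^±`.
-/

open Complex Real

/-- The Mellin transform `Ĵ_r^+(s) = (2π)^{-s} Γ(s/2 + ir) Γ(s/2 − ir) cos(πs/2)`. -/
noncomputable def Jhatplus (r s : ℂ) : ℂ :=
  (2 * (π : ℂ)) ^ (-s) * Complex.Gamma (s / 2 + I * r) * Complex.Gamma (s / 2 - I * r) *
    Complex.cos ((π : ℂ) * s / 2)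

/-- The Mellin transform `Ĵ_r^−(s) = (2π)^{-s} Γ(s/2 + ir) Γ(s/2 − ir) cosh(πr)`. -/
noncomputable def Jhatminus (r s : ℂ) : ℂ :=
  (2 * (π : ℂ)) ^ (-s) * Complex.Gamma (s / 2 + I * r) * Complex.Gamma (s / 2 - I * r) *
    Complex.cosh ((π : ℂ) * r)

/-- `𝒢_T^+(w) = Ĵ₀^+(w) Ĵ_{2T}^−(w) + Ĵ₀^−(w) Ĵ_{2T}^+(w)`. -/
noncomputable def Gplus (T : ℝ) (w : ℂ) : ℂ :=
  Jhatplus 0 w * Jhatminus ((2 * T : ℝ) : ℂ) w + Jhatminus 0 w * Jhatplus ((2 * T : ℝ) : ℂ) w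

/-- `𝒢_T^−(w) = Ĵ₀^+(w) Ĵ_{2T}^+(w) + Ĵ₀^−(w) Ĵ_{2T}^−(w)`. -/
noncomputable def Gminus (T : ℝ) (w : ℂ) : ℂ :=
  Jhatplus 0 w * Jhatplus ((2 * T : ℝ) : ℂ) w + Jhatminus 0 w * Jhatminus ((2 * T : ℝ) : ℂ) w

open Finset Filter Set MeasureTheory

/-! ### Elementary inequalities -/

theorem Real.arctan_le_self {x : ℝ} (hx : 0 ≤ x) : Real.arctan x ≤ x :=
  calc Real.arctan x ≤ Real.tan (Real.arctan x) :=
        Real.le_tan (Real.arctan_nonneg.2 hx) (Real.arctan_lt_pi_div_two x)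
    _ = x := Real.tan_arctan x

theorem Real.rpow_le_rpow_abs_mul_rpow {b₁ b₂ M : ℝ} (p : ℝ) (h₁ : 0 < b₁) (h₂ : 0 < b₂)
    (h₁₂ : b₁ ≤ M * b₂) (h₂₁ : b₂ ≤ M * b₁) : b₁ ^ p ≤ M ^ |p| * b₂ ^ p := by
  have hM : 0 < M := pos_of_mul_pos_left (h₁.trans_le h₁₂) h₂.le
  rcases le_total 0 p with hp | hp
  · rw [abs_of_nonneg hp, ← Real.mul_rpow hM.le h₂.le]
    exact Real.rpow_le_rpow h₁.le h₁₂ hp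
  · calc b₁ ^ p = M ^ (-p) * (M * b₁) ^ p := by
          rw [Real.mul_rpow hM.le h₁.le, ← mul_assoc, ← Real.rpow_add hM, neg_add_cancel,
            Real.rpow_zero, one_mul]
      _ ≤ M ^ |p| * b₂ ^ p := by
          rw [abs_of_nonpos hp]
          exact mul_le_mul_of_nonneg_left (Real.rpow_le_rpow_of_nonpos h₂ h₂₁ hp) (by positivity)

theorem abs_sub_add_abs_add (x y : ℝ) : |x - y| + |x + y| = 2 * max |x| |y| := by
  rcases le_total |x| |y| with h | h <;> simp only [h, max_eq_left, max_eq_right] <;>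
  cases abs_cases x <;> cases abs_cases y <;> cases abs_cases (x - y) <;> cases abs_cases (x + y) <;>
  linarith

theorem Complex.norm_cos_le_exp_abs_im (z : ℂ) : ‖Complex.cos z‖ ≤ Real.exp |z.im| := by
  rw [Complex.cos, norm_div, Complex.norm_two]
  have h₁ : ‖Complex.exp (z * I)‖ ≤ Real.exp |z.im| := by
    rw [Complex.norm_exp]; gcongr; simpa using neg_le_abs z.im
  have h₂ : ‖Complex.exp (-z * I)‖ ≤ Real.exp |z.im| := by
    rw [Complex.norm_exp]; gcongr; simpa using le_abs_self z.im
  linarith [norm_add_le (Complex.exp (z * I)) (Complex.exp (-z * I))]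

theorem Real.cosh_le_exp_abs (x : ℝ) : Real.cosh x ≤ Real.exp |x| := by
  rw [Real.cosh_eq]
  linarith [Real.exp_le_exp.2 (le_abs_self x), Real.exp_le_exp.2 (neg_le_abs x)]

/-! ### The trapezoid rule for convex functions -/

theorem ConvexOn.le_chord {f : ℝ → ℝ} {a b x : ℝ} (hf : ConvexOn ℝ (Icc a b) f) (hx : x ∈ Icc a b)
    (hab : a < b) : f x ≤ f a + (x - a) * (f b - f a) / (b - a) := by
  have hba : b - a ≠ 0 := (sub_pos.2 hab).ne'
  have h := hf.2 (left_mem_Icc.2 hab.le) (right_mem_Icc.2 hab.le)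
    (div_nonneg (sub_nonneg.2 hx.2) (sub_pos.2 hab).le)
    (div_nonneg (sub_nonneg.2 hx.1) (sub_pos.2 hab).le)
    (by rw [← add_div, div_eq_one_iff_eq hba]; ring)
  have hx' : ((b - x) / (b - a)) • a + ((x - a) / (b - a)) • b = x := by
    simp only [smul_eq_mul]; field_simp; ring
  rw [hx', smul_eq_mul, smul_eq_mul] at h
  calc f x ≤ (b - x) / (b - a) * f a + (x - a) / (b - a) * f b := h
    _ = _ := by field_simp; ring

theorem ConvexOn.intervalIntegral_le_trapezoid {f : ℝ → ℝ} {a b : ℝ} (hab : a ≤ b)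
    (hf : ConvexOn ℝ (Icc a b) f) (hint : IntervalIntegrable f volume a b) :
    ∫ x in a..b, f x ≤ (b - a) * (f a + f b) / 2 := by
  rcases hab.eq_or_lt with rfl | hlt
  · simp
  have hchord : ∫ x in a..b, (f a + (x - a) * (f b - f a) / (b - a)) =
      (b - a) * (f a + f b) / 2 := by
    rw [intervalIntegral.integral_add intervalIntegrable_const
      (by apply Continuous.intervalIntegrable; fun_prop)]
    simp only [intervalIntegral.integral_const, smul_eq_mul, intervalIntegral.integral_div,
      intervalIntegral.integral_mul_const, intervalIntegral.intervalIntegrable_id,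
      intervalIntegrable_const, intervalIntegral.integral_sub, integral_id]
    field_simp
    ring
  rw [← hchord]
  exact intervalIntegral.integral_mono_on hab hint
    (by apply Continuous.intervalIntegrable; fun_prop) fun x hx => hf.le_chord hx hlt

theorem ConvexOn.intervalIntegral_le_trapezoid_sum {f : ℝ → ℝ} {a : ℝ} (hf : ConvexOn ℝ (Ici a) f)
    (hcont : ContinuousOn f (Ici a)) (n : ℕ) :
    ∫ x in a..a + n, f x ≤ ∑ k ∈ range (n + 1), f (a + k) - (f a + f (a + n)) / 2 := by
  have hint : ∀ b c : ℝ, a ≤ b → a ≤ c → IntervalIntegrable f volume b c := fun b c hb hc =>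
    (hcont.mono fun x hx => le_trans (le_min hb hc) hx.1).intervalIntegrable
  induction n with
  | zero => simp
  | succ n ih =>
    have hn : a ≤ a + n := by simp
    have hstep : ∫ x in a + n..a + (n + 1 : ℕ), f x ≤ (f (a + n) + f (a + (n + 1 : ℕ))) / 2 := by
      have hn1 : a + n ≤ a + (n + 1 : ℕ) := by push_cast; linarith
      have := (hf.subset (fun x hx => hn.trans hx.1) (convex_Icc _ _)).intervalIntegral_le_trapezoid
        hn1 (hint _ _ hn (hn.trans hn1))
      simpa using this
    rw [← intervalIntegral.integral_add_adjacent_intervals (hint _ _ le_rfl hn)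
      (hint _ _ hn (by push_cast; linarith)), sum_range_succ]
    linarith

/-! ### Decay of the Gamma function on vertical lines -/

namespace Complex

theorem norm_GammaSeq_eq_mul_prod {z : ℂ} (hz : 0 < z.re) (n : ℕ) :
    ‖GammaSeq z n‖ = Real.GammaSeq z.re n * ∏ k ∈ range (n + 1), (z.re + k) / ‖z + k‖ := by
  have hpos : ∀ k : ℕ, 0 < z.re + k := fun k => by positivity
  have hne : ∀ k : ℕ, z + k ≠ 0 := fun k h => (hpos k).ne' (by simpa using congrArg re h)
  rw [GammaSeq, Real.GammaSeq, norm_div, norm_mul, norm_prod, prod_div_distrib,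
    norm_natCast_cpow_of_re_ne_zero _ hz.ne', norm_natCast]
  have h1 : ∏ k ∈ range (n + 1), (z.re + k) ≠ 0 := prod_ne_zero_iff.2 fun k _ => (hpos k).ne'
  have h2 : ∏ k ∈ range (n + 1), ‖z + k‖ ≠ 0 :=
    prod_ne_zero_iff.2 fun k _ => norm_ne_zero_iff.2 (hne k)
  field_simp

theorem norm_Gamma_le_mul_prod {z : ℂ} (hz : 0 < z.re) (n : ℕ) :
    ‖Gamma z‖ ≤ Real.Gamma z.re * ∏ k ∈ range n, (z.re + k) / ‖z + k‖ := by
  have hfactor : ∀ k : ℕ, 0 ≤ (z.re + k) / ‖z + k‖ ∧ (z.re + k) / ‖z + k‖ ≤ 1 := fun k => by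
    have hk : 0 < z.re + k := by positivity
    refine ⟨by positivity, div_le_one_of_le₀ ?_ (norm_nonneg _)⟩
    simpa [abs_of_pos hk] using abs_re_le_norm (z + k)
  refine le_of_tendsto_of_tendsto ((GammaSeq_tendsto_Gamma z).norm)
    ((Real.GammaSeq_tendsto_Gamma z.re).mul_const _) ?_
  filter_upwards [eventually_ge_atTop n] with N hN
  rw [norm_GammaSeq_eq_mul_prod hz]
  refine mul_le_mul_of_nonneg_left ?_ (by unfold Real.GammaSeq; positivity)
  exact prod_le_prod_of_subset_of_le_one (range_subset_range.2 (by omega))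
    (fun k _ => (hfactor k).1) (fun k _ _ => (hfactor k).2)

end Complex

noncomputable def eulerFactorLog (y x : ℝ) : ℝ := Real.log (1 + (y / x) ^ 2)

noncomputable def eulerFactorLogPrimitive (y x : ℝ) : ℝ :=
  x * eulerFactorLog y x + 2 * y * Real.arctan (x / y)

theorem eulerFactorLog_nonneg (y x : ℝ) : 0 ≤ eulerFactorLog y x :=
  Real.log_nonneg (le_add_of_nonneg_right (sq_nonneg _))

theorem eulerFactorLog_abs (y x : ℝ) : eulerFactorLog |y| x = eulerFactorLog y x := by
  simp [eulerFactorLog, div_pow]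

theorem hasDerivAt_eulerFactorLog (y : ℝ) {x : ℝ} (hx : x ≠ 0) :
    HasDerivAt (eulerFactorLog y) (-(2 * y ^ 2 / (x * (x ^ 2 + y ^ 2)))) x := by
  have h := (((hasDerivAt_inv hx).const_mul y).fun_pow 2 |>.const_add 1).log (by positivity)
  convert h using 1
  · ext t; simp [eulerFactorLog, div_eq_mul_inv]
  · have : x ^ 2 + y ^ 2 ≠ 0 := by positivity
    simp only [Nat.cast_ofNat, Nat.add_one_sub_one, pow_one]
    field_simp

theorem convexOn_eulerFactorLog (y : ℝ) : ConvexOn ℝ (Ioi 0) (eulerFactorLog y) := by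
  have hderiv : ∀ x ∈ Ioi (0 : ℝ), HasDerivAt (eulerFactorLog y) _ x := fun x hx =>
    hasDerivAt_eulerFactorLog y (ne_of_gt hx)
  refine MonotoneOn.convexOn_of_deriv (convex_Ioi 0)
    (fun x hx => (hderiv x hx).continuousAt.continuousWithinAt)
    (fun x hx => (hderiv x (interior_subset hx)).differentiableAt.differentiableWithinAt) ?_
  rw [interior_Ioi]
  intro x₁ hx₁ x₂ hx₂ hle
  rw [(hderiv x₁ hx₁).deriv, (hderiv x₂ hx₂).deriv, neg_le_neg_iff]
  have : (0 : ℝ) < x₁ := hx₁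
  have : (0 : ℝ) < x₂ := hx₂
  gcongr

theorem hasDerivAt_eulerFactorLogPrimitive {y x : ℝ} (hy : y ≠ 0) (hx : x ≠ 0) :
    HasDerivAt (eulerFactorLogPrimitive y) (eulerFactorLog y x) x := by
  have h : HasDerivAt (eulerFactorLogPrimitive y) _ x :=
    ((hasDerivAt_id' x).fun_mul (hasDerivAt_eulerFactorLog y hx)).add
      (((hasDerivAt_id' x).div_const y).arctan.const_mul (2 * y))
  convert h using 1
  have : x ^ 2 + y ^ 2 ≠ 0 := by positivity
  field_simp
  ring

theorem integral_eulerFactorLog {y a b : ℝ} (hy : y ≠ 0) (ha : 0 < a) (hab : a ≤ b) :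
    ∫ x in a..b, eulerFactorLog y x = eulerFactorLogPrimitive y b - eulerFactorLogPrimitive y a := by
  have hpos : ∀ x ∈ uIcc a b, 0 < x := fun x hx => ha.trans_le (by simpa [hab] using hx.1)
  refine intervalIntegral.integral_eq_sub_of_hasDerivAt
    (fun x hx => hasDerivAt_eulerFactorLogPrimitive hy (hpos x hx).ne') ?_
  exact ContinuousOn.intervalIntegrable fun x hx =>
    (hasDerivAt_eulerFactorLog y (hpos x hx).ne').continuousAt.continuousWithinAt

theorem pi_mul_sub_two_le_eulerFactorLogPrimitive {y x : ℝ} (hy : 0 < y) (hx : y ^ 2 ≤ x) :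
    π * y - 2 ≤ eulerFactorLogPrimitive y x := by
  have hx0 : 0 < x := lt_of_lt_of_le (by positivity) hx
  have harctan : Real.arctan (x / y) = π / 2 - Real.arctan (y / x) := by
    rw [← Real.arctan_inv_of_pos (by positivity), inv_div]
  have hyx : y / x ≤ 1 / y := by
    rw [div_le_div_iff₀ hx0 hy]; nlinarith
  have := Real.arctan_le_self (div_nonneg hy.le hx0.le)
  have := mul_nonneg hx0.le (eulerFactorLog_nonneg y x)
  have : 2 * y * (1 / y) = 2 := by field_simp
  unfold eulerFactorLogPrimitive
  rw [harctan]
  nlinarith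

theorem eulerFactorLogPrimitive_le {y x : ℝ} (hy : 0 < y) (hx : 0 ≤ x) :
    eulerFactorLogPrimitive y x ≤ x * eulerFactorLog y x + 2 * x := by
  have h := mul_le_mul_of_nonneg_left (Real.arctan_le_self (div_nonneg hx hy.le))
    (by positivity : 0 ≤ 2 * y)
  have : 2 * y * (x / y) = 2 * x := by field_simp
  unfold eulerFactorLogPrimitive
  linarith

theorem le_sum_eulerFactorLog {a y : ℝ} (ha : 0 < a) (hy : 0 < y) {n : ℕ} (hn : y ^ 2 ≤ a + n) :
    π * y - 2 * (1 + a) + (1 / 2 - a) * eulerFactorLog y a ≤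
      ∑ k ∈ range (n + 1), eulerFactorLog y (a + k) := by
  have hcont : ContinuousOn (eulerFactorLog y) (Ici a) := fun x hx =>
    (hasDerivAt_eulerFactorLog y (ha.trans_le hx).ne').continuousAt.continuousWithinAt
  -- The end term `eulerFactorLog y a / 2` kept by the trapezoid rule is what lowers the exponent
  -- of the final bound from `a` to `a - 1/2`.
  have htrap := ((convexOn_eulerFactorLog y).subset (Ici_subset_Ioi.2 ha) (convex_Ici a))
    |>.intervalIntegral_le_trapezoid_sum hcont n
  rw [integral_eulerFactorLog hy.ne' ha (by simp)] at htrap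
  have hend := pi_mul_sub_two_le_eulerFactorLogPrimitive hy hn
  have hstart := eulerFactorLogPrimitive_le hy ha.le
  linarith [eulerFactorLog_nonneg y (a + n)]

theorem div_norm_add_mul_I_eq_exp {x : ℝ} (hx : 0 < x) (y : ℝ) :
    x / ‖(x : ℂ) + y * I‖ = Real.exp (-eulerFactorLog y x / 2) := by
  have hsqrt : √(1 + (y / x) ^ 2) = √(x ^ 2 + y ^ 2) / x := by
    rw [eq_div_iff hx.ne', ← Real.sqrt_sq hx.le, ← Real.sqrt_mul (by positivity),
      Real.sqrt_sq hx.le]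
    congr 1
    field_simp
  rw [Complex.norm_add_mul_I, neg_div, Real.exp_neg, Real.exp_half, eulerFactorLog,
    Real.exp_log (by positivity), hsqrt, inv_div]

namespace Complex

theorem norm_Gamma_add_mul_I_le {a : ℝ} (ha : 0 < a) (y : ℝ) :
    ‖Gamma (a + y * I)‖ ≤ Real.Gamma a * Real.exp (1 + a) * (1 + (y / a) ^ 2) ^ ((a - 1 / 2) / 2) *
      Real.exp (-(π / 2) * |y|) := by
  rcases eq_or_ne y 0 with rfl | hy
  · simpa [Gamma_ofReal, abs_of_pos (Real.Gamma_pos_of_pos ha)] using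
      le_mul_of_one_le_right (Real.Gamma_pos_of_pos ha).le
        (Real.one_le_exp (by linarith : (0 : ℝ) ≤ 1 + a))
  -- `y² ≤ a + n` brings the arctan term of the primitive at `a + n` within `2` of `π |y|`.
  set n := ⌈|y| ^ 2⌉₊
  have hn : |y| ^ 2 ≤ a + n := by linarith [Nat.le_ceil (|y| ^ 2)]
  have hfactor : ∀ k : ℕ, (a + k) / ‖(a : ℂ) + y * I + k‖ =
      Real.exp (-eulerFactorLog |y| (a + k) / 2) := fun k => by
    rw [eulerFactorLog_abs, ← div_norm_add_mul_I_eq_exp (by positivity)]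
    congr 2
    push_cast
    ring
  calc ‖Gamma (a + y * I)‖
      ≤ Real.Gamma a * ∏ k ∈ range (n + 1), (a + k) / ‖(a : ℂ) + y * I + k‖ := by
        simpa using norm_Gamma_le_mul_prod (z := a + y * I) (by simpa using ha) (n + 1)
    _ = Real.Gamma a * Real.exp (-(∑ k ∈ range (n + 1), eulerFactorLog |y| (a + k)) / 2) := by
        simp only [hfactor, ← Real.exp_sum, neg_div, sum_div, sum_neg_distrib]
    _ ≤ Real.Gamma a * Real.exp (-(π * |y| - 2 * (1 + a) + (1 / 2 - a) * eulerFactorLog y a) / 2) := by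
        have := le_sum_eulerFactorLog ha (abs_pos.2 hy) hn
        rw [eulerFactorLog_abs] at this
        gcongr
    _ = _ := by
        rw [Real.rpow_def_of_pos (by positivity), eulerFactorLog]
        simp only [mul_assoc, ← Real.exp_add]
        ring_nf

theorem exists_norm_Gamma_le {a : ℝ} (ha : 0 < a) :
    ∃ C > 0, ∀ y : ℝ, ‖Gamma (a + y * I)‖ ≤ C * (1 + |y|) ^ (a - 1 / 2) * Real.exp (-(π / 2) * |y|) := by
  obtain ⟨M, hM⟩ : ∃ M : ℝ, M = 2 * (1 + a ^ 2 + a⁻¹ ^ 2) := ⟨_, rfl⟩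
  have hM0 : 0 < M := by rw [hM]; positivity
  refine ⟨Real.Gamma a * Real.exp (1 + a) * M ^ |(a - 1 / 2) / 2|, by positivity, fun y => ?_⟩
  obtain ⟨v, hv, hyv, hsq⟩ : ∃ v, 0 ≤ v ∧ |y| = a * v ∧ (y / a) ^ 2 = v ^ 2 :=
    ⟨|y / a|, abs_nonneg _, by rw [abs_div, abs_of_pos ha]; field_simp, (sq_abs _).symm⟩
  have hinv : a⁻¹ ^ 2 * a ^ 2 = 1 := by field_simp
  have h₁₂ : 1 + v ^ 2 ≤ M * (1 + a * v) ^ 2 := by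
    have : 1 + a ^ 2 * v ^ 2 ≤ (1 + a * v) ^ 2 := by nlinarith
    rw [hM]; nlinarith
  have h₂₁ : (1 + a * v) ^ 2 ≤ M * (1 + v ^ 2) := by
    have : (1 + a * v) ^ 2 ≤ 2 * (1 + a ^ 2 * v ^ 2) := by nlinarith [sq_nonneg (a * v - 1)]
    rw [hM]; nlinarith [sq_nonneg a⁻¹, sq_nonneg v, mul_nonneg (sq_nonneg a⁻¹) (sq_nonneg v)]
  have hcomp := Real.rpow_le_rpow_abs_mul_rpow ((a - 1 / 2) / 2) (by positivity) (by positivity)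
    (hsq ▸ hyv ▸ h₁₂) (hsq ▸ hyv ▸ h₂₁)
  rw [← Real.rpow_natCast_mul (by positivity),
    show ((2 : ℕ) : ℝ) * ((a - 1 / 2) / 2) = a - 1 / 2 by push_cast; ring] at hcomp
  calc ‖Gamma (a + y * I)‖
      ≤ Real.Gamma a * Real.exp (1 + a) * (1 + (y / a) ^ 2) ^ ((a - 1 / 2) / 2) *
          Real.exp (-(π / 2) * |y|) := norm_Gamma_add_mul_I_le ha y
    _ ≤ Real.Gamma a * Real.exp (1 + a) * (M ^ |(a - 1 / 2) / 2| * (1 + |y|) ^ (a - 1 / 2)) *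
          Real.exp (-(π / 2) * |y|) := by
        gcongr
    _ = _ := by ring

end Complex

/-! ### Bounds for Ĵ^± and 𝒢^± -/

noncomputable def mellinGammaPair (r s : ℂ) : ℂ :=
  (2 * (π : ℂ)) ^ (-s) * Complex.Gamma (s / 2 + I * r) * Complex.Gamma (s / 2 - I * r)

theorem exists_norm_mellinGammaPair_le {σ : ℝ} (hσ : σ < 1) :
    ∃ K > 0, ∀ r τ : ℝ, ‖mellinGammaPair r (1 - (σ + τ * I))‖ ≤
      K * ((1 + |τ - 2 * r|) * (1 + |τ + 2 * r|)) ^ (-σ / 2) *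
        Real.exp (-(π / 2) * max |τ| (2 * |r|)) := by
  set a := (1 - σ) / 2
  obtain ⟨C, hC, hΓ⟩ := Complex.exists_norm_Gamma_le (a := a) (by simp only [a]; linarith)
  have ha : a - 1 / 2 = -σ / 2 := by simp only [a]; ring
  have hΓ' : ∀ u : ℝ, ‖Complex.Gamma (a + u * I)‖ ≤
      C * 2 ^ |σ / 2| * (1 + |2 * u|) ^ (-σ / 2) * Real.exp (-(π / 2) * |u|) := fun u => by
    have := Real.rpow_le_rpow_abs_mul_rpow (-σ / 2) (b₁ := 1 + |u|) (b₂ := 1 + |2 * u|) (M := 2)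
      (by positivity) (by positivity) (by rw [abs_mul]; norm_num; linarith [abs_nonneg u])
      (by rw [abs_mul]; norm_num; linarith [abs_nonneg u])
    rw [neg_div, abs_neg] at this
    calc ‖Complex.Gamma (a + u * I)‖ ≤ C * (1 + |u|) ^ (-σ / 2) * Real.exp (-(π / 2) * |u|) :=
          ha ▸ hΓ u
      _ ≤ C * (2 ^ |σ / 2| * (1 + |2 * u|) ^ (-σ / 2)) * Real.exp (-(π / 2) * |u|) := by
          gcongr; rwa [neg_div]
      _ = _ := by ring
  refine ⟨(2 * π) ^ (σ - 1) * (C * 2 ^ |σ / 2|) ^ 2, by positivity, fun r τ => ?_⟩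
  have hpow : ‖(2 * (π : ℂ)) ^ (-(1 - (σ + τ * I)))‖ = (2 * π) ^ (σ - 1) := by
    rw [show (2 * (π : ℂ)) = ((2 * π : ℝ) : ℂ) by push_cast; ring,
      Complex.norm_cpow_eq_rpow_re_of_pos (by positivity)]
    simp
  have hplus : (1 - (σ + τ * I)) / 2 + I * r = a + ((r - τ / 2 : ℝ) : ℂ) * I := by
    simp only [a]; push_cast; ring
  have hminus : (1 - (σ + τ * I)) / 2 - I * r = a + ((-r - τ / 2 : ℝ) : ℂ) * I := by
    simp only [a]; push_cast; ring
  have hexp : |r - τ / 2| + |-r - τ / 2| = max |τ| (2 * |r|) := by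
    rw [show -r - τ / 2 = -(τ / 2 + r) by ring, abs_neg, abs_sub_comm, abs_sub_add_abs_add,
      abs_div, abs_two, mul_max_of_nonneg _ _ (zero_le_two (α := ℝ)), mul_div_cancel₀ _ two_ne_zero]
  rw [mellinGammaPair, norm_mul, norm_mul, hpow, hplus, hminus]
  calc _ ≤ (2 * π) ^ (σ - 1) *
        (C * 2 ^ |σ / 2| * (1 + |τ - 2 * r|) ^ (-σ / 2) * Real.exp (-(π / 2) * |r - τ / 2|)) *
        (C * 2 ^ |σ / 2| * (1 + |τ + 2 * r|) ^ (-σ / 2) * Real.exp (-(π / 2) * |-r - τ / 2|)) := by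
        have h₁ := hΓ' (r - τ / 2)
        have h₂ := hΓ' (-r - τ / 2)
        rw [show 2 * (r - τ / 2) = -(τ - 2 * r) by ring, abs_neg] at h₁
        rw [show 2 * (-r - τ / 2) = -(τ + 2 * r) by ring, abs_neg] at h₂
        gcongr
    _ = _ := by
        rw [Real.mul_rpow (x := 1 + |τ - 2 * r|) (by positivity) (by positivity), ← hexp,
          mul_add (-(π / 2)), Real.exp_add]
        ring

theorem exists_norm_Jhat_le {σ : ℝ} (hσ : σ < 1) :
    ∃ K > 0, ∀ r τ : ℝ,
      ‖Jhatplus r (1 - (σ + τ * I))‖ ≤ K * ((1 + |τ - 2 * r|) * (1 + |τ + 2 * r|)) ^ (-σ / 2) *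
        Real.exp (π / 2 * (|τ| - max |τ| (2 * |r|))) ∧
      ‖Jhatminus r (1 - (σ + τ * I))‖ ≤ K * ((1 + |τ - 2 * r|) * (1 + |τ + 2 * r|)) ^ (-σ / 2) *
        Real.exp (π / 2 * (2 * |r| - max |τ| (2 * |r|))) := by
  obtain ⟨K, hK, hbound⟩ := exists_norm_mellinGammaPair_le hσ
  refine ⟨K, hK, fun r τ => ⟨?_, ?_⟩⟩
  · have hcos : ‖Complex.cos (π * (1 - (σ + τ * I)) / 2)‖ ≤ Real.exp (π / 2 * |τ|) := by
      have him : (π * (1 - (σ + τ * I)) / 2 : ℂ).im = π / 2 * -τ := by simp [mul_div_right_comm]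
      rw [← abs_neg τ, ← abs_of_pos (half_pos Real.pi_pos), ← abs_mul, ← him]
      exact Complex.norm_cos_le_exp_abs_im _
    refine (norm_mul_le_of_le (hbound r τ) hcos).trans_eq ?_
    rw [mul_assoc, ← Real.exp_add]
    ring_nf
  · have hcosh : ‖Complex.cosh (π * r)‖ ≤ Real.exp (π / 2 * (2 * |r|)) := by
      rw [← ofReal_mul, ← ofReal_cosh, norm_real, Real.norm_of_nonneg (Real.cosh_pos _).le]
      refine (Real.cosh_le_exp_abs _).trans_eq ?_
      rw [abs_mul, abs_of_pos Real.pi_pos]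
      ring_nf
    refine (norm_mul_le_of_le (hbound r τ) hcosh).trans_eq ?_
    rw [mul_assoc, ← Real.exp_add]
    ring_nf

noncomputable def Eplus (t τ : ℝ) : ℝ :=
  if |τ| ≤ 4 * t then 1 else Real.exp (-(π / 2) * (|τ| - 4 * t))

noncomputable def Eminus (t τ : ℝ) : ℝ :=
  if |τ| ≤ 2 * t then Real.exp (-(π / 2) * |τ|)
    else if |τ| ≤ 4 * t then Real.exp (-(π / 2) * (4 * t - |τ|)) else 1

theorem Eplus_eq_exp (t τ : ℝ) : Eplus t τ = Real.exp (π / 2 * (4 * t - max |τ| (4 * t))) := by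
  unfold Eplus
  split_ifs with h
  · rw [max_eq_right h, sub_self, mul_zero, Real.exp_zero]
  · rw [max_eq_left (not_le.1 h).le]; ring_nf

theorem Eminus_eq_exp (t τ : ℝ) : Eminus t τ =
    Real.exp (π / 2 * max (|τ| - max |τ| (4 * t)) (-|τ| + (4 * t - max |τ| (4 * t)))) := by
  unfold Eminus
  split_ifs with h₂ h₄
  · have hm : max |τ| (4 * t) = 4 * t := max_eq_right (by linarith [abs_nonneg τ])
    rw [hm, max_eq_right (by linarith)]; ring_nf
  · rw [max_eq_right h₄, max_eq_left (by linarith)]; ring_nf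
  · rw [max_eq_left (not_le.1 h₄).le, max_eq_left (by linarith), sub_self, mul_zero, Real.exp_zero]

section

variable {t τ K P₀ P : ℝ} {w : ℂ}
  (h0p : ‖Jhatplus 0 w‖ ≤ K * P₀)
  (h0m : ‖Jhatminus 0 w‖ ≤ K * P₀ * Real.exp (π / 2 * -|τ|))
  (hTp : ‖Jhatplus ((2 * t : ℝ) : ℂ) w‖ ≤ K * P * Real.exp (π / 2 * (|τ| - max |τ| (4 * t))))
  (hTm : ‖Jhatminus ((2 * t : ℝ) : ℂ) w‖ ≤ K * P * Real.exp (π / 2 * (4 * t - max |τ| (4 * t))))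
include h0p h0m hTp hTm

theorem norm_Gplus_le (ht : 0 ≤ t) : ‖Gplus t w‖ ≤ 2 * K ^ 2 * P₀ * P * Eplus t τ := by
  have hKP : 0 ≤ K * P₀ * (K * P) := mul_nonneg ((norm_nonneg _).trans h0p)
    ((mul_nonneg_iff_of_pos_right (Real.exp_pos _)).1 ((norm_nonneg _).trans hTp))
  calc ‖Gplus t w‖
      ≤ K * P₀ * (K * P * Real.exp (π / 2 * (4 * t - max |τ| (4 * t)))) +
        K * P₀ * Real.exp (π / 2 * -|τ|) * (K * P * Real.exp (π / 2 * (|τ| - max |τ| (4 * t)))) :=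
        (norm_add_le _ _).trans (add_le_add (norm_mul_le_of_le h0p hTm) (norm_mul_le_of_le h0m hTp))
    _ = K * P₀ * (K * P) * (Real.exp (π / 2 * (4 * t - max |τ| (4 * t))) +
          Real.exp (π / 2 * -|τ| + π / 2 * (|τ| - max |τ| (4 * t)))) := by
        rw [Real.exp_add]; ring
    _ ≤ K * P₀ * (K * P) * (Eplus t τ + Eplus t τ) := by
        rw [Eplus_eq_exp]
        gcongr
        linarith [mul_nonneg Real.pi_pos.le ht]
    _ = 2 * K ^ 2 * P₀ * P * Eplus t τ := by ring

theorem norm_Gminus_le : ‖Gminus t w‖ ≤ 2 * K ^ 2 * P₀ * P * Eminus t τ := by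
  have hKP : 0 ≤ K * P₀ * (K * P) := mul_nonneg ((norm_nonneg _).trans h0p)
    ((mul_nonneg_iff_of_pos_right (Real.exp_pos _)).1 ((norm_nonneg _).trans hTp))
  calc ‖Gminus t w‖
      ≤ K * P₀ * (K * P * Real.exp (π / 2 * (|τ| - max |τ| (4 * t)))) +
        K * P₀ * Real.exp (π / 2 * -|τ|) * (K * P * Real.exp (π / 2 * (4 * t - max |τ| (4 * t)))) :=
        (norm_add_le _ _).trans (add_le_add (norm_mul_le_of_le h0p hTp) (norm_mul_le_of_le h0m hTm))
    _ = K * P₀ * (K * P) * (Real.exp (π / 2 * (|τ| - max |τ| (4 * t))) +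
          Real.exp (π / 2 * (-|τ| + (4 * t - max |τ| (4 * t))))) := by
        rw [mul_add (π / 2), Real.exp_add]; ring
    _ ≤ K * P₀ * (K * P) * (Eminus t τ + Eminus t τ) := by
        rw [Eminus_eq_exp]
        gcongr <;> [exact le_max_left _ _; exact le_max_right _ _]
    _ = 2 * K ^ 2 * P₀ * P * Eminus t τ := by ring

end

theorem stmt_12 (σ : ℝ) (hσ : σ < 1) :
    ∃ C > 0, ∀ tg : ℝ, 1 ≤ tg → ∀ τ : ℝ,
      (‖Gplus tg (1 - ((σ : ℂ) + (τ : ℂ) * I))‖ ≤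
        C * (1 + |τ|) ^ (-σ) * ((1 + |τ + 4 * tg|) * (1 + |τ - 4 * tg|)) ^ (-σ / 2) *
          (if |τ| ≤ 4 * tg then 1 else Real.exp (-(π / 2) * (|τ| - 4 * tg)))) ∧
      (‖Gminus tg (1 - ((σ : ℂ) + (τ : ℂ) * I))‖ ≤
        C * (1 + |τ|) ^ (-σ) * ((1 + |τ + 4 * tg|) * (1 + |τ - 4 * tg|)) ^ (-σ / 2) *
          (if |τ| ≤ 2 * tg then Real.exp (-(π / 2) * |τ|)
            else if |τ| ≤ 4 * tg then Real.exp (-(π / 2) * (4 * tg - |τ|)) else 1)) := by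
  obtain ⟨K, hK, hJ⟩ := exists_norm_Jhat_le hσ
  refine ⟨2 * K ^ 2, by positivity, fun tg htg τ => ?_⟩
  have hP₀ : ((1 + |τ|) * (1 + |τ|)) ^ (-σ / 2) = (1 + |τ|) ^ (-σ) := by
    rw [Real.mul_rpow (by positivity) (by positivity), ← Real.rpow_add (by positivity)]
    ring_nf
  obtain ⟨h0p, h0m⟩ := hJ 0 τ
  obtain ⟨hTp, hTm⟩ := hJ (2 * tg) τ
  simp only [mul_zero, sub_zero, add_zero, abs_zero, max_eq_left (abs_nonneg τ), sub_self,
    zero_sub, Real.exp_zero, mul_one, hP₀, ofReal_zero] at h0p h0m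
  rw [abs_of_nonneg (by linarith : 0 ≤ 2 * tg), ← mul_assoc, show (2 : ℝ) * 2 = 4 by norm_num,
    mul_comm (1 + _)] at hTp hTm
  exact ⟨norm_Gplus_le h0p h0m hTp hTm (by linarith), norm_Gminus_le h0p h0m hTp hTm⟩
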